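/- arXiv:1608.00490 — 4 statements merged into one kernel-verified Lean document; each statement's English description precedes it below -/
import Mathlib

section
/- Let N ≥ 3, 0 < ν < (N-2)/2, α = N-2-2ν. Define the radial function u(r) = (N α^2/(N-2))^{(N-2)/4} (1 + r^{2α/(N-2)})^{-(N-2)/2} for r > 0. Then u satisfies the ODE u''(r) + ((N-1-2ν)/r) u'(r) + r^{-(2^*-2)ν} u(r)^{2^*-1} = 0 for all r > 0, where 2^* = 2N/(N-2). -/
theorem stmt5 (N : ℕ) (hN : 3 ≤ N) (ν : ℝ)
    (hν0 : 0 < ν) (hν1 : ν < ((N : ℝ) - 2) / 2)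
    (α : ℝ) (hα : α = (N : ℝ) - 2 - 2 * ν)
    (twoStar : ℝ) (h2s : twoStar = 2 * (N : ℝ) / ((N : ℝ) - 2))
    (u : ℝ → ℝ)
    (hu : ∀ r : ℝ, u r = ((N : ℝ) * α ^ 2 / ((N : ℝ) - 2)) ^ (((N : ℝ) - 2) / 4) *
        (1 + r ^ (2 * α / ((N : ℝ) - 2))) ^ (-(((N : ℝ) - 2) / 2))) :
    ∀ r : ℝ, 0 < r →
      deriv (deriv u) r + (((N : ℝ) - 1 - 2 * ν) / r) * deriv u r +
        r ^ (-((twoStar - 2) * ν)) * u r ^ (twoStar - 1) = 0 := by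
  have hN3 : (3:ℝ) ≤ (N:ℝ) := by exact_mod_cast hN
  have hN2 : (0:ℝ) < (N:ℝ) - 2 := by linarith
  have hα0 : 0 < α := by rw [hα]; linarith
  set c : ℝ := ((N:ℝ) - 2) / 2 with hc
  set β : ℝ := 2 * α / ((N:ℝ) - 2) with hβ
  set K : ℝ := (N:ℝ) * α ^ 2 / ((N:ℝ) - 2) with hKdef
  set C : ℝ := K ^ (((N:ℝ) - 2) / 4) with hCdef
  have hc0 : 0 < c := by rw [hc]; linarith
  have hβ0 : 0 < β := by rw [hβ]; exact div_pos (by linarith) hN2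
  have hK0 : 0 < K := by rw [hKdef]; exact div_pos (mul_pos (by linarith) (pow_pos hα0 2)) hN2
  have hC0 : 0 < C := Real.rpow_pos_of_pos hK0 _
  have hβc : c * β = α := by rw [hc, hβ]; field_simp
  have hKval : K = α * (β + α) := by rw [hKdef, hβ]; field_simp; ring
  have hu' : u = fun s => C * (1 + s ^ β) ^ (-c) := funext hu
  have hA : ∀ s : ℝ, 0 < s → 0 < 1 + s ^ β := fun s hs => by positivity
  -- first derivative
  have hdu : ∀ s : ℝ, 0 < s →
      HasDerivAt u (C * (-c * β) * ((1 + s ^ β) ^ (-c - 1) * s ^ (β - 1))) s := by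
    intro s hs
    have h1 : HasDerivAt (fun x : ℝ => 1 + x ^ β) (β * s ^ (β - 1)) s :=
      (Real.hasDerivAt_rpow_const (Or.inl hs.ne')).const_add 1
    have h2 := (h1.rpow_const (p := -c) (Or.inl (hA s hs).ne')).const_mul C
    rw [hu']
    have : C * (-c * β) * ((1 + s ^ β) ^ (-c - 1) * s ^ (β - 1)) =
        C * (β * s ^ (β - 1) * -c * (1 + s ^ β) ^ (-c - 1)) := by ring
    rw [this]
    exact h2
  have hvspec : ∀ s : ℝ, 0 < s →
      deriv u s = C * (-c * β) * ((1 + s ^ β) ^ (-c - 1) * s ^ (β - 1)) :=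
    fun s hs => (hdu s hs).deriv
  intro r hr
  have hAr := hA r hr
  -- second derivative
  have hdd : HasDerivAt (fun s : ℝ => C * (-c * β) * ((1 + s ^ β) ^ (-c - 1) * s ^ (β - 1)))
      (C * (-c * β) * ((β * r ^ (β - 1) * (-c - 1) * (1 + r ^ β) ^ (-c - 2)) * r ^ (β - 1)
        + (1 + r ^ β) ^ (-c - 1) * ((β - 1) * r ^ (β - 2)))) r := by
    have h1 : HasDerivAt (fun x : ℝ => 1 + x ^ β) (β * r ^ (β - 1)) r :=
      (Real.hasDerivAt_rpow_const (Or.inl hr.ne')).const_add 1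
    have h2 : HasDerivAt (fun x : ℝ => (1 + x ^ β) ^ (-c - 1))
        (β * r ^ (β - 1) * (-c - 1) * (1 + r ^ β) ^ (-c - 2)) r := by
      have := h1.rpow_const (p := -c - 1) (Or.inl hAr.ne')
      have he : (-c - 1) - 1 = -c - 2 := by ring
      rwa [he] at this
    have h3 : HasDerivAt (fun x : ℝ => x ^ (β - 1)) ((β - 1) * r ^ (β - 2)) r := by
      have := Real.hasDerivAt_rpow_const (p := β - 1) (Or.inl hr.ne')
      have he : (β - 1) - 1 = β - 2 := by ring
      rwa [he] at this
    exact (h2.mul h3).const_mul (C * (-c * β))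
  have hEq : deriv u =ᶠ[nhds r]
      (fun s : ℝ => C * (-c * β) * ((1 + s ^ β) ^ (-c - 1) * s ^ (β - 1))) :=
    Filter.eventuallyEq_of_mem (isOpen_Ioi.mem_nhds hr) (fun s hs => hvspec s hs)
  have h2nd : deriv (deriv u) r =
      C * (-c * β) * ((β * r ^ (β - 1) * (-c - 1) * (1 + r ^ β) ^ (-c - 2)) * r ^ (β - 1)
        + (1 + r ^ β) ^ (-c - 1) * ((β - 1) * r ^ (β - 2))) := by
    rw [hEq.deriv_eq, hdd.deriv]
  -- rewrite nonlinear term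
  have e1 : -((twoStar - 2) * ν) = β - 2 := by
    rw [h2s, hβ, hα]; field_simp; ring
  have eC : C ^ (twoStar - 1) = C * K := by
    rw [hCdef, ← Real.rpow_mul hK0.le,
      show ((N:ℝ) - 2) / 4 * (twoStar - 1) = ((N:ℝ) - 2) / 4 + 1 by rw [h2s]; first | (field_simp; ring) | field_simp,
      Real.rpow_add hK0, Real.rpow_one]
  have eA : ((1 + r ^ β) ^ (-c)) ^ (twoStar - 1) = (1 + r ^ β) ^ (-c - 2) := by
    rw [← Real.rpow_mul hAr.le,
      show -c * (twoStar - 1) = -c - 2 by rw [h2s, hc]; first | (field_simp; ring) | field_simp]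
  have hnl : r ^ (-((twoStar - 2) * ν)) * u r ^ (twoStar - 1) =
      r ^ (β - 2) * (C * K * (1 + r ^ β) ^ (-c - 2)) := by
    rw [e1, hu r, Real.mul_rpow hC0.le (Real.rpow_nonneg hAr.le _), eC, eA]; try ring
  -- power relations
  have hr1 : r ^ (β - 1) = r ^ (β - 2) * r := by
    rw [show β - 1 = β - 2 + 1 by ring, Real.rpow_add_one hr.ne']
  have hA1 : (1 + r ^ β) ^ (-c - 1) = (1 + r ^ β) ^ (-c - 2) * (1 + r ^ β) := by
    rw [show -c - 1 = -c - 2 + 1 by ring, Real.rpow_add_one hAr.ne']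
  have hY : r ^ β = r ^ (β - 2) * r * r := by
    have h1 : r ^ (β - 2 + 1) = r ^ (β - 2) * r := Real.rpow_add_one hr.ne' _
    have h2 : r ^ (β - 2 + 1 + 1) = r ^ (β - 2 + 1) * r := Real.rpow_add_one hr.ne' _
    calc r ^ β = r ^ (β - 2 + 1 + 1) := by rw [show β - 2 + 1 + 1 = β from by ring]
      _ = r ^ (β - 2) * r * r := by rw [h2, h1]
  have hN1 : (N:ℝ) - 1 - 2 * ν = α + 1 := by rw [hα]; ring
  rw [h2nd, hvspec r hr, hnl, hN1, hr1, hA1]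
  rw [hY] at *
  set X : ℝ := r ^ (β - 2) with hX
  set Z : ℝ := (1 + X * r * r) ^ (-c - 2) with hZ
  rw [hKval, ← hβc]
  field_simp
  ring
end

section
/- Let N ≥ 3, 0 < ν < (N-2)/2, α = N-2-2ν, and let Z(x) = (1 + |x|^{2α/(N-2)}/(Nα^2/(N-2)))^{-(N-2)/2} for x ∈ ℝ^N with 2^* = 2N/(N-2). Then ∫_{ℝ^N} |x|^{-2^*ν} Z(x)^{2^*-1} dx = ω_N α^{N-1} (N/(N-2))^{(N-2)/2}, where ω_N is the surface measure of the unit sphere in ℝ^N. -/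
open MeasureTheory

open Set Filter Real in

lemma radial_integral (p c k : ℝ) (hp : 0 < p) (hc : 0 < c) (hk : 0 < k) :
    ∫ y in Set.Ioi (0:ℝ), y ^ (k * p - 1) * (1 + y ^ p / c) ^ (-(k + 1)) = c ^ k / (k * p) := by
  set g : ℝ → ℝ := fun y => (c ^ k / (k * p)) * (y ^ p / (c + y ^ p)) ^ k with hg
  have hkp : 0 < k * p := mul_pos hk hp
  have hcont : ContinuousWithinAt g (Set.Ici 0) 0 := by
    have h1 : ContinuousAt (fun y : ℝ => y ^ p) 0 :=
      Real.continuousAt_rpow_const 0 p (Or.inr hp.le)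
    have h2 : ContinuousAt (fun y : ℝ => c + y ^ p) 0 := continuousAt_const.add h1
    have h3 : ContinuousAt (fun y : ℝ => y ^ p / (c + y ^ p)) 0 :=
      h1.div h2 (by simp [Real.zero_rpow hp.ne', hc.ne'])
    have h4 : ContinuousAt (fun u : ℝ => u ^ k) ((fun y : ℝ => y ^ p / (c + y ^ p)) 0) := by
      simp only [Real.zero_rpow hp.ne', zero_div]
      exact Real.continuousAt_rpow_const 0 k (Or.inr hk.le)
    have h5 := ContinuousAt.comp (g := fun u : ℝ => u ^ k) (f := fun y : ℝ => y ^ p / (c + y ^ p)) (x := (0:ℝ)) h4 h3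
    have h6 : ContinuousAt g 0 := by
      exact (continuousAt_const.mul h5 :
        ContinuousAt (fun y : ℝ => c ^ k / (k * p) * (y ^ p / (c + y ^ p)) ^ k) 0)
    exact h6.continuousWithinAt
  have key : ∀ x ∈ Set.Ioi (0:ℝ),
      HasDerivAt g (x ^ (k * p - 1) * (1 + x ^ p / c) ^ (-(k + 1))) x := by
    intro x hx
    have hx0 : (0:ℝ) < x := hx
    have hA : 0 < x ^ p := Real.rpow_pos_of_pos hx0 p
    have hB : 0 < c + x ^ p := by positivity
    have d1 : HasDerivAt (fun y : ℝ => y ^ p) (p * x ^ (p - 1)) x := by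
      simpa [mul_comm] using Real.hasDerivAt_rpow_const (p := p) (Or.inl hx0.ne')
    have d2 : HasDerivAt (fun y : ℝ => c + y ^ p) (p * x ^ (p - 1)) x := d1.const_add c
    have d3 : HasDerivAt (fun y : ℝ => y ^ p / (c + y ^ p))
        ((p * x ^ (p - 1) * (c + x ^ p) - x ^ p * (p * x ^ (p - 1))) / (c + x ^ p) ^ 2) x :=
      d1.div d2 hB.ne'
    have d4 : HasDerivAt (fun u : ℝ => u ^ k)
        (k * (x ^ p / (c + x ^ p)) ^ (k - 1)) (x ^ p / (c + x ^ p)) := by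
      simpa [mul_comm] using Real.hasDerivAt_rpow_const (x := x ^ p / (c + x ^ p)) (p := k)
        (Or.inl (by positivity))
    have d5 := (d4.comp x d3).const_mul (c ^ k / (k * p))
    have E : x ^ (k * p - 1) * (1 + x ^ p / c) ^ (-(k + 1)) =
        c ^ k / (k * p) * (k * (x ^ p / (c + x ^ p)) ^ (k - 1) *
          ((p * x ^ (p - 1) * (c + x ^ p) - x ^ p * (p * x ^ (p - 1))) / (c + x ^ p) ^ 2)) := by
      have e1 : (1 + x ^ p / c) = (c + x ^ p) / c := by field_simp
      have e2 : ((c + x ^ p) / c) ^ (-(k + 1)) = c ^ (k + 1) / (c + x ^ p) ^ (k + 1) := by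
        rw [Real.rpow_neg (by positivity), Real.div_rpow hB.le hc.le, inv_div]
      have e3 : (x ^ p / (c + x ^ p)) ^ (k - 1) = x ^ (p * (k - 1)) / (c + x ^ p) ^ (k - 1) := by
        rw [Real.div_rpow hA.le hB.le, Real.rpow_mul hx0.le]
      have e5 : (c + x ^ p) ^ (k + 1) = (c + x ^ p) ^ (k - 1) * (c + x ^ p) ^ (2:ℕ) := by
        rw [← Real.rpow_natCast (c + x ^ p) 2, ← Real.rpow_add hB]
        ring_nf
      have e6 : x ^ (k * p - 1) = x ^ (p * (k - 1)) * x ^ (p - 1) := by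
        rw [← Real.rpow_add hx0]
        ring_nf
      rw [e1, e2, e3, e5, e6]
      have h1 : x ^ (p * (k - 1)) ≠ 0 := (Real.rpow_pos_of_pos hx0 _).ne'
      have h2 : (c + x ^ p) ^ (k - 1) ≠ 0 := (Real.rpow_pos_of_pos hB _).ne'
      have h3 : c ^ (k + 1) = c ^ k * c := by
        rw [Real.rpow_add hc, Real.rpow_one]
      rw [h3]
      field_simp
      ring
    rw [E]
    simpa [Function.comp] using d5
  have nonneg : ∀ x ∈ Set.Ioi (0:ℝ),
      0 ≤ x ^ (k * p - 1) * (1 + x ^ p / c) ^ (-(k + 1)) := by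
    intro x hx
    have hx0 : (0:ℝ) < x := hx
    positivity
  have t4 : Tendsto g atTop (nhds (c ^ k / (k * p))) := by
    have t1 : Tendsto (fun y : ℝ => y ^ p) atTop atTop := tendsto_rpow_atTop hp
    have t2 : Tendsto (fun t : ℝ => t / (c + t)) atTop (nhds 1) := by
      have h0 : Tendsto (fun t : ℝ => c / t) atTop (nhds 0) :=
        Tendsto.div_atTop tendsto_const_nhds tendsto_id
      have h1 : Tendsto (fun t : ℝ => (c / t + 1)⁻¹) atTop (nhds 1) := by
        have := (h0.add (tendsto_const_nhds (x := (1:ℝ)))).inv₀ (by norm_num)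
        simpa using this
      refine h1.congr' ?_
      filter_upwards [eventually_gt_atTop (0:ℝ)] with t ht
      field_simp
    have t3 : Tendsto (fun y : ℝ => (y ^ p / (c + y ^ p)) ^ k) atTop (nhds 1) := by
      have hcomp := t2.comp t1
      have hcont1 : ContinuousAt (fun u : ℝ => u ^ k) 1 :=
        Real.continuousAt_rpow_const 1 k (Or.inl one_ne_zero)
      have := (hcont1.tendsto).comp hcomp
      rw [Real.one_rpow] at this
      exact this
    have := t3.const_mul (c ^ k / (k * p))
    simpa using this
  rw [integral_Ioi_of_hasDerivAt_of_nonneg hcont key nonneg t4]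
  simp [hg, Real.zero_rpow hp.ne', Real.zero_rpow hk.ne']

theorem stmt7 (N : ℕ) (hN : 3 ≤ N) (ν : ℝ)
    (hν0 : 0 < ν) (hν1 : ν < ((N : ℝ) - 2) / 2)
    (α : ℝ) (hα : α = (N : ℝ) - 2 - 2 * ν)
    (twoStar : ℝ) (h2s : twoStar = 2 * (N : ℝ) / ((N : ℝ) - 2))
    (Z : EuclideanSpace ℝ (Fin N) → ℝ)
    (hZ : ∀ x, Z x = (1 + ‖x‖ ^ (2 * α / ((N : ℝ) - 2)) /
        ((N : ℝ) * α ^ 2 / ((N : ℝ) - 2))) ^ (-(((N : ℝ) - 2) / 2)))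
    (ωN : ℝ)
    (hω : ωN = (N : ℝ) * (volume (Metric.ball (0 : EuclideanSpace ℝ (Fin N)) 1)).toReal) :
    ∫ x : EuclideanSpace ℝ (Fin N), ‖x‖ ^ (-(twoStar * ν)) * Z x ^ (twoStar - 1) =
      ωN * α ^ (N - 1) * ((N : ℝ) / ((N : ℝ) - 2)) ^ (((N : ℝ) - 2) / 2) := by
  have hN3 : (3:ℝ) ≤ (N:ℝ) := by exact_mod_cast hN
  have hN2 : (0:ℝ) < (N:ℝ) - 2 := by linarith
  have hNpos : (0:ℝ) < (N:ℝ) := by linarith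
  have hα0 : 0 < α := by rw [hα]; linarith
  set p : ℝ := 2 * α / ((N:ℝ) - 2) with hpdef
  set c : ℝ := (N:ℝ) * α ^ 2 / ((N:ℝ) - 2) with hcdef
  set k : ℝ := (N:ℝ) / 2 with hkdef
  have hp : 0 < p := by positivity
  have hc : 0 < c := by positivity
  have hk : 0 < k := by positivity
  set f : ℝ → ℝ := fun r =>
    r ^ (-(twoStar * ν)) * ((1 + r ^ p / c) ^ (-(((N:ℝ) - 2) / 2))) ^ (twoStar - 1) with hfdef
  haveI : Nontrivial (EuclideanSpace ℝ (Fin N)) := by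
    apply Module.nontrivial_of_finrank_pos (R := ℝ)
    rw [finrank_euclideanSpace_fin]; omega
  have hrw : (fun x : EuclideanSpace ℝ (Fin N) =>
      ‖x‖ ^ (-(twoStar * ν)) * Z x ^ (twoStar - 1)) = fun x => f ‖x‖ := by
    funext x; rw [hZ x]
  rw [hrw, integral_fun_norm_addHaar volume f, finrank_euclideanSpace_fin, nsmul_eq_mul, smul_eq_mul]
  have hJ : ∫ y in Set.Ioi (0:ℝ), y ^ (N - 1) • f y = c ^ k / (k * p) := by
    rw [← radial_integral p c k hp hc hk]
    apply setIntegral_congr_fun measurableSet_Ioi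
    intro y hy
    have hy0 : (0:ℝ) < y := hy
    have hb : (0:ℝ) < 1 + y ^ p / c := by positivity
    have A1 : ((1 + y ^ p / c) ^ (-(((N:ℝ) - 2) / 2))) ^ (twoStar - 1)
        = (1 + y ^ p / c) ^ (-(k + 1)) := by
      rw [← Real.rpow_mul hb.le]
      congr 1
      rw [h2s, hkdef]
      field_simp
      ring
    have A2 : (y:ℝ) ^ (N - 1) * y ^ (-(twoStar * ν)) = y ^ (k * p - 1) := by
      rw [← Real.rpow_natCast y (N - 1), ← Real.rpow_add hy0]
      congr 1
      have hcast : ((N - 1 : ℕ) : ℝ) = (N:ℝ) - 1 := by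
        have h1 : (1:ℕ) ≤ N := by omega
        push_cast [Nat.cast_sub h1]; ring
      rw [hcast, h2s, hkdef, hpdef, hα]
      field_simp
      ring
    simp only [smul_eq_mul, hfdef]
    rw [A1, ← mul_assoc, A2]
  rw [hJ, hω]
  have hC : c ^ k / (k * p) = α ^ (N - 1) * ((N:ℝ) / ((N:ℝ) - 2)) ^ (((N:ℝ) - 2) / 2) := by
    have hc' : c = ((N:ℝ) / ((N:ℝ) - 2)) * α ^ 2 := by rw [hcdef]; ring
    have hck : c ^ k = ((N:ℝ) / ((N:ℝ) - 2)) ^ k * α ^ (N:ℕ) := by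
      rw [hc', Real.mul_rpow (by positivity) (by positivity)]
      congr 1
      rw [← Real.rpow_natCast α 2, ← Real.rpow_mul hα0.le, ← Real.rpow_natCast α N]
      congr 1
      rw [hkdef]; push_cast; ring
    have hsplit : ((N:ℝ) / ((N:ℝ) - 2)) ^ k =
        ((N:ℝ) / ((N:ℝ) - 2)) ^ (((N:ℝ) - 2) / 2) * ((N:ℝ) / ((N:ℝ) - 2)) := by
      rw [show k = ((N:ℝ) - 2) / 2 + 1 by rw [hkdef]; ring,
        Real.rpow_add (by positivity), Real.rpow_one]
    have hαN : α ^ (N:ℕ) = α ^ (N - 1) * α := by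
      rw [← pow_succ]; congr 1; omega
    have hkp : k * p = (N:ℝ) * α / ((N:ℝ) - 2) := by
      rw [hkdef, hpdef]; field_simp
    rw [hck, hsplit, hαN, hkp]
    field_simp
  rw [hC]
  simp only [measureReal_def]
  ring
end

section
/- Let N ≥ 3 and 0 ≤ ν < (N-2)/2. Define w(B_t(x)) = ∫_{|x-y|<t} |y|^{-2ν} dy for x ∈ ℝ^N, t > 0. Then there exists a constant C > 0 independent of x, r and k such that for all x ∈ ℝ^N, r > 0 and k ∈ ℕ, w(B_{2^k r}(x)) ≥ C · 2^{k(N-2ν)} · w(B_r(x)). -/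
open MeasureTheory Metric Set

section aux

variable {N : ℕ}

lemma aux_integrableOn_ball (hN : 0 < N) {α : ℝ} (hα : -(N:ℝ) < α) (hα0 : α ≤ 0) (R : ℝ) :
    IntegrableOn (fun y : EuclideanSpace ℝ (Fin N) => ‖y‖ ^ α)
      (ball (0 : EuclideanSpace ℝ (Fin N)) R) := by
  haveI : Nonempty (Fin N) := ⟨⟨0, hN⟩⟩
  set E := EuclideanSpace ℝ (Fin N)
  rcases le_or_gt R 0 with hR | hR
  · rw [ball_eq_empty.2 hR]; exact integrableOn_empty
  rcases eq_or_lt_of_le hα0 with hα' | hα'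
  · subst hα'
    simp only [Real.rpow_zero]
    exact integrableOn_const measure_ball_lt_top.ne
  have hmeas : Measurable fun y : E => ‖y‖ ^ α := measurable_norm.pow_const α
  constructor
  · exact hmeas.aestronglyMeasurable
  · have hnn : ∀ y : E, 0 ≤ ‖y‖ ^ α := fun y => Real.rpow_nonneg (norm_nonneg y) α
    rw [hasFiniteIntegral_iff_norm]
    have : ∀ y : E, ENNReal.ofReal ‖‖y‖ ^ α‖ = ENNReal.ofReal (‖y‖ ^ α) := by
      intro y; rw [Real.norm_of_nonneg (hnn y)]
    simp_rw [this]
    rw [lintegral_eq_lintegral_meas_le (volume.restrict (ball (0:E) R))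
      (Filter.Eventually.of_forall hnn) hmeas.aemeasurable]
    set g := fun t : ℝ => (volume.restrict (ball (0:E) R)) {a : E | t ≤ ‖a‖ ^ α} with hg
    have hsub : ∀ t : ℝ, 0 < t → {a : E | t ≤ ‖a‖ ^ α} ⊆ closedBall 0 (t ^ α⁻¹) := by
      intro t ht a ha
      simp only [mem_setOf_eq] at ha
      have ha0 : a ≠ 0 := by
        rintro rfl
        rw [norm_zero, Real.zero_rpow hα'.ne] at ha
        linarith
      have h1 : (‖a‖ ^ α) ^ α⁻¹ ≤ t ^ α⁻¹ :=
        Real.rpow_le_rpow_of_nonpos ht ha (inv_nonpos.2 hα0)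
      rw [← Real.rpow_mul (norm_nonneg a), mul_inv_cancel₀ hα'.ne, Real.rpow_one] at h1
      simpa [mem_closedBall_zero_iff] using h1
    calc ∫⁻ t in Ioi (0:ℝ), g t
        ≤ ∫⁻ t in Ioc (0:ℝ) 1 ∪ Ioi 1, g t := lintegral_mono_set Ioi_subset_Ioc_union_Ioi
      _ ≤ (∫⁻ t in Ioc (0:ℝ) 1, g t) + ∫⁻ t in Ioi (1:ℝ), g t := lintegral_union_le _ _ _
      _ < ⊤ := by
          refine ENNReal.add_lt_top.2 ⟨?_, ?_⟩
          · have hb : ∀ t : ℝ, g t ≤ volume (ball (0:E) R) := by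
              intro t
              calc g t ≤ (volume.restrict (ball (0:E) R)) univ :=
                    measure_mono (subset_univ _)
                _ = volume (ball (0:E) R) := Measure.restrict_apply_univ _
            calc ∫⁻ t in Ioc (0:ℝ) 1, g t
                ≤ ∫⁻ _ in Ioc (0:ℝ) 1, volume (ball (0:E) R) :=
                  lintegral_mono fun t => hb t
              _ = volume (ball (0:E) R) * volume (Ioc (0:ℝ) 1) := by
                  rw [setLIntegral_const]
              _ < ⊤ := ENNReal.mul_lt_top measure_ball_lt_top (by simp)
          · have hb : ∀ t : ℝ, t ∈ Ioi (1:ℝ) → g t ≤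
                ENNReal.ofReal (t ^ (α⁻¹ * N)) * volume (ball (0:E) 1) := by
              intro t ht
              have ht0 : (0:ℝ) < t := lt_trans one_pos ht
              have h1 : g t ≤ volume (closedBall (0:E) (t ^ α⁻¹)) :=
                le_trans (Measure.restrict_apply_le _ _) (measure_mono (hsub t ht0))
              rw [Measure.addHaar_closedBall volume (0:E) (Real.rpow_nonneg ht0.le _)] at h1
              refine h1.trans (le_of_eq ?_)
              congr 1
              rw [show Module.finrank ℝ E = N from finrank_euclideanSpace_fin,
                ← Real.rpow_natCast (t ^ α⁻¹) N, ← Real.rpow_mul ht0.le]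
            calc ∫⁻ t in Ioi (1:ℝ), g t
                ≤ ∫⁻ t in Ioi (1:ℝ), ENNReal.ofReal (t ^ (α⁻¹ * N)) * volume (ball (0:E) 1) :=
                  setLIntegral_mono' measurableSet_Ioi hb
              _ = (∫⁻ t in Ioi (1:ℝ), ENNReal.ofReal (t ^ (α⁻¹ * N))) * volume (ball (0:E) 1) :=
                  lintegral_mul_const' _ _ measure_ball_lt_top.ne
              _ < ⊤ := by
                  refine ENNReal.mul_lt_top ?_ measure_ball_lt_top
                  refine IntegrableOn.setLIntegral_lt_top ?_
                  refine integrableOn_Ioi_rpow_of_lt ?_ one_pos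
                  rw [inv_mul_eq_div, div_lt_iff_of_neg hα']
                  linarith

lemma aux_scaling (hN : 0 < N) {α : ℝ} (R : ℝ) (hR : 0 < R) :
    ∫ y in ball (0 : EuclideanSpace ℝ (Fin N)) R, ‖y‖ ^ α =
      R ^ ((N:ℝ) + α) * ∫ y in ball (0 : EuclideanSpace ℝ (Fin N)) 1, ‖y‖ ^ α := by
  set E := EuclideanSpace ℝ (Fin N)
  have h := Measure.setIntegral_comp_smul_of_pos (volume : Measure E)
    (fun y : E => ‖y‖ ^ α) (ball (0:E) 1) hR
  rw [smul_unitBall_of_pos hR] at h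
  have h2 : ∀ z : E, ‖R • z‖ ^ α = R ^ α * ‖z‖ ^ α := by
    intro z
    rw [norm_smul, Real.norm_of_nonneg hR.le, Real.mul_rpow hR.le (norm_nonneg z)]
  simp_rw [h2] at h
  rw [integral_const_mul] at h
  rw [smul_eq_mul] at h
  have hRN : (0:ℝ) < R ^ Module.finrank ℝ E := pow_pos hR _
  have : R ^ Module.finrank ℝ E * (R ^ α * ∫ y in ball (0:E) 1, ‖y‖ ^ α)
      = ∫ y in ball (0:E) R, ‖y‖ ^ α := by
    rw [h]; field_simp
  rw [← this, Real.rpow_add hR, Real.rpow_natCast]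
  have : Module.finrank ℝ E = N := finrank_euclideanSpace_fin
  rw [this]; ring


lemma aux_ball_subset (x : EuclideanSpace ℝ (Fin N)) {t : ℝ} :
    ball x t ⊆ ball (0 : EuclideanSpace ℝ (Fin N)) (‖x‖ + t) := by
  intro y hy
  rw [mem_ball_zero_iff]
  have h1 := norm_sub_norm_le y x
  have h2 : dist y x < t := mem_ball.1 hy
  rw [dist_eq_norm] at h2
  linarith

lemma aux_lower (hN : 0 < N) {α : ℝ} (hα : -(N:ℝ) < α) (hα0 : α ≤ 0)
    (x : EuclideanSpace ℝ (Fin N)) (t : ℝ) (ht : 0 < t) :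
    (volume (ball x t)).toReal * (‖x‖ + t) ^ α ≤ ∫ y in ball x t, ‖y‖ ^ α := by
  haveI : Nonempty (Fin N) := ⟨⟨0, hN⟩⟩
  have hxt : 0 < ‖x‖ + t := by positivity
  have hint : IntegrableOn (fun y : EuclideanSpace ℝ (Fin N) => ‖y‖ ^ α) (ball x t) :=
    (aux_integrableOn_ball hN hα hα0 (‖x‖ + t)).mono_set (aux_ball_subset x)
  have hae : ∀ᵐ y ∂(volume.restrict (ball x t)), (‖x‖ + t) ^ α ≤ ‖y‖ ^ α := by
    have h0 : ∀ᵐ y : EuclideanSpace ℝ (Fin N) ∂volume, y ≠ 0 := by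
      rw [ae_iff]
      have he : {y : EuclideanSpace ℝ (Fin N) | ¬ y ≠ 0} = {0} := by ext y; simp
      rw [he, measure_singleton]
    filter_upwards [ae_restrict_of_ae h0, self_mem_ae_restrict measurableSet_ball] with y hy0 hy
    have h1 : 0 < ‖y‖ := norm_pos_iff.2 hy0
    have h2 : ‖y‖ ≤ ‖x‖ + t := by
      have h3 := norm_sub_norm_le y x
      have h4 : dist y x < t := mem_ball.1 hy
      rw [dist_eq_norm] at h4
      linarith
    exact Real.rpow_le_rpow_of_nonpos h1 h2 hα0
  have h := integral_mono_ae (show Integrable (fun _ : EuclideanSpace ℝ (Fin N) => (‖x‖ + t) ^ α) (volume.restrict (ball x t)) from integrableOn_const measure_ball_lt_top.ne) (show Integrable (fun y : EuclideanSpace ℝ (Fin N) => ‖y‖ ^ α) (volume.restrict (ball x t)) from hint) hae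
  rwa [setIntegral_const, smul_eq_mul, measureReal_def] at h

lemma aux_upper (hN : 0 < N) {α : ℝ} (hα : -(N:ℝ) < α) (hα0 : α ≤ 0)
    (x : EuclideanSpace ℝ (Fin N)) (r : ℝ) (hr : 0 < r) :
    ∫ y in ball x r, ‖y‖ ^ α ≤
      ((3:ℝ) ^ (N:ℝ) * (∫ y in ball (0 : EuclideanSpace ℝ (Fin N)) 1, ‖y‖ ^ α)
        + (3:ℝ) ^ (-α) * (volume (ball (0 : EuclideanSpace ℝ (Fin N)) 1)).toReal)
        * r ^ (N:ℝ) * (‖x‖ + r) ^ α := by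
  haveI : Nonempty (Fin N) := ⟨⟨0, hN⟩⟩
  set K := ∫ y in ball (0:EuclideanSpace ℝ (Fin N)) 1, ‖y‖ ^ α with hKdef
  set V := (volume (ball (0:EuclideanSpace ℝ (Fin N)) 1)).toReal with hVdef
  have hK0 : 0 ≤ K := setIntegral_nonneg measurableSet_ball
    (fun y _ => Real.rpow_nonneg (norm_nonneg y) α)
  have hV0 : 0 ≤ V := ENNReal.toReal_nonneg
  have hxr : 0 < ‖x‖ + r := by positivity
  have hxra : 0 < (‖x‖ + r) ^ α := Real.rpow_pos_of_pos hxr α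
  have hrN : 0 < r ^ (N:ℝ) := Real.rpow_pos_of_pos hr _
  have h3a : (0:ℝ) < 3 ^ (-α) := Real.rpow_pos_of_pos (by norm_num) _
  have h3N : (0:ℝ) < 3 ^ (N:ℝ) := Real.rpow_pos_of_pos (by norm_num) _
  have hint : IntegrableOn (fun y : EuclideanSpace ℝ (Fin N) => ‖y‖ ^ α) (ball x r) :=
    (aux_integrableOn_ball hN hα hα0 (‖x‖ + r)).mono_set (aux_ball_subset x)
  rcases le_or_gt ‖x‖ (2 * r) with hc | hc
  · -- ball x r ⊆ ball 0 (3r)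
    have h3r : (0:ℝ) < 3 * r := by linarith
    have hsub : ball x r ⊆ ball (0:EuclideanSpace ℝ (Fin N)) (3 * r) := by
      refine (aux_ball_subset x).trans (ball_subset_ball (by linarith))
    have h1 : ∫ y in ball x r, ‖y‖ ^ α ≤ ∫ y in ball (0:EuclideanSpace ℝ (Fin N)) (3 * r), ‖y‖ ^ α :=
      setIntegral_mono_set (aux_integrableOn_ball hN hα hα0 (3 * r))
        (Filter.Eventually.of_forall fun y => Real.rpow_nonneg (norm_nonneg y) α)
        (HasSubset.Subset.eventuallyLE hsub)
    have h2 : ∫ y in ball (0:EuclideanSpace ℝ (Fin N)) (3 * r), ‖y‖ ^ α = (3 * r) ^ ((N:ℝ) + α) * K :=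
      aux_scaling hN _ h3r
    have h4 : (3 * r) ^ ((N:ℝ) + α) = 3 ^ (N:ℝ) * r ^ (N:ℝ) * (3 * r) ^ α := by
      rw [Real.rpow_add h3r, Real.mul_rpow (by norm_num) hr.le]
    have h5 : (3 * r) ^ α ≤ (‖x‖ + r) ^ α :=
      Real.rpow_le_rpow_of_nonpos hxr (by linarith) hα0
    calc ∫ y in ball x r, ‖y‖ ^ α
        ≤ (3 * r) ^ ((N:ℝ) + α) * K := h1.trans (le_of_eq h2)
      _ = (3 ^ (N:ℝ) * r ^ (N:ℝ) * K) * (3 * r) ^ α := by rw [h4]; ring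
      _ ≤ (3 ^ (N:ℝ) * r ^ (N:ℝ) * K) * (‖x‖ + r) ^ α :=
          mul_le_mul_of_nonneg_left h5 (by positivity)
      _ ≤ (3 ^ (N:ℝ) * K + 3 ^ (-α) * V) * r ^ (N:ℝ) * (‖x‖ + r) ^ α := by
          nlinarith [mul_nonneg (mul_nonneg h3a.le hV0) (mul_nonneg hrN.le hxra.le)]
  · -- far case
    have hd3 : 0 < (‖x‖ + r) / 3 := by positivity
    have hpt : ∀ y ∈ ball x r, ‖y‖ ^ α ≤ ((‖x‖ + r) / 3) ^ α := by
      intro y hy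
      have h4 : dist y x < r := mem_ball.1 hy
      rw [dist_eq_norm] at h4
      have h3 := norm_sub_norm_le x y
      have h5 : (‖x‖ + r) / 3 ≤ ‖y‖ := by
        rw [norm_sub_rev] at h3
        linarith
      exact Real.rpow_le_rpow_of_nonpos hd3 h5 hα0
    have h1 : ∫ y in ball x r, ‖y‖ ^ α ≤ ∫ _ in ball x r, ((‖x‖ + r) / 3) ^ α :=
      setIntegral_mono_on hint (integrableOn_const measure_ball_lt_top.ne)
        measurableSet_ball hpt
    have h2 : ∫ _ in ball x r, ((‖x‖ + r) / 3) ^ α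
        = (volume (ball x r)).toReal * ((‖x‖ + r) / 3) ^ α := by
      rw [setIntegral_const, smul_eq_mul, measureReal_def]
    have hvol : (volume (ball x r)).toReal = r ^ (N:ℝ) * V := by
      rw [Measure.addHaar_ball volume x hr.le, ENNReal.toReal_mul,
        ENNReal.toReal_ofReal (by positivity),
        show Module.finrank ℝ (EuclideanSpace ℝ (Fin N)) = N from finrank_euclideanSpace_fin,
        ← Real.rpow_natCast r N]
    have h6 : ((‖x‖ + r) / 3) ^ α = 3 ^ (-α) * (‖x‖ + r) ^ α := by
      rw [Real.div_rpow hxr.le (by norm_num), Real.rpow_neg (by norm_num)]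
      ring
    calc ∫ y in ball x r, ‖y‖ ^ α
        ≤ (volume (ball x r)).toReal * ((‖x‖ + r) / 3) ^ α := h1.trans (le_of_eq h2)
      _ = (3 ^ (-α) * V) * r ^ (N:ℝ) * (‖x‖ + r) ^ α := by rw [hvol, h6]; ring
      _ ≤ (3 ^ (N:ℝ) * K + 3 ^ (-α) * V) * r ^ (N:ℝ) * (‖x‖ + r) ^ α := by
          nlinarith [mul_nonneg (mul_nonneg h3N.le hK0) (mul_nonneg hrN.le hxra.le)]

lemma aux_main (hN : 0 < N) {α : ℝ} (hα : -(N:ℝ) < α) (hα0 : α ≤ 0) :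
    ∃ C : ℝ, 0 < C ∧ ∀ (x : EuclideanSpace ℝ (Fin N)) (r : ℝ), 0 < r → ∀ k : ℕ,
      C * (2:ℝ) ^ ((k:ℝ) * ((N:ℝ) + α)) * (∫ y in ball x r, ‖y‖ ^ α) ≤
        ∫ y in ball x ((2:ℝ) ^ k * r), ‖y‖ ^ α := by
  haveI : Nonempty (Fin N) := ⟨⟨0, hN⟩⟩
  obtain ⟨K, hKdef⟩ : ∃ K : ℝ, K = ∫ y in ball (0:EuclideanSpace ℝ (Fin N)) 1, ‖y‖ ^ α := ⟨_, rfl⟩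
  obtain ⟨V, hVdef⟩ : ∃ V : ℝ, V = (volume (ball (0:EuclideanSpace ℝ (Fin N)) 1)).toReal := ⟨_, rfl⟩
  have hV : 0 < V := by
    rw [hVdef]
    exact ENNReal.toReal_pos (measure_ball_pos volume _ one_pos).ne' measure_ball_lt_top.ne
  have hK : 0 < K := by
    rw [hKdef]
    rw [setIntegral_pos_iff_support_of_nonneg_ae
      (Filter.Eventually.of_forall fun y => Real.rpow_nonneg (norm_nonneg y) α)
      (aux_integrableOn_ball hN hα hα0 1)]
    refine lt_of_lt_of_le ?_ (measure_mono (?_ : ball (0:EuclideanSpace ℝ (Fin N)) 1 \ {0} ⊆ _))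
    · rw [measure_diff_null (measure_singleton _)]
      exact measure_ball_pos volume _ one_pos
    · rintro y ⟨hy, hy0⟩
      simp only [mem_singleton_iff] at hy0
      refine ⟨?_, hy⟩
      have hy1 : 0 < ‖y‖ := norm_pos_iff.2 hy0
      exact ne_of_gt (Real.rpow_pos_of_pos hy1 α)
  have h3a : (0:ℝ) < 3 ^ (-α) := Real.rpow_pos_of_pos (by norm_num) _
  have h3N : (0:ℝ) < (3:ℝ) ^ (N:ℝ) := Real.rpow_pos_of_pos (by norm_num) _
  have hM : 0 < (3:ℝ) ^ (N:ℝ) * K + 3 ^ (-α) * V :=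
    add_pos (mul_pos h3N hK) (mul_pos h3a hV)
  refine ⟨V / ((3:ℝ) ^ (N:ℝ) * K + 3 ^ (-α) * V), div_pos hV hM, ?_⟩
  intro x r hr k
  have h2k : (1:ℝ) ≤ 2 ^ k := one_le_pow₀ one_le_two
  have ht : (0:ℝ) < 2 ^ k * r := by positivity
  have hxr : 0 < ‖x‖ + r := by positivity
  have hxt : 0 < ‖x‖ + 2 ^ k * r := by positivity
  have hlow := aux_lower hN hα hα0 x ((2:ℝ) ^ k * r) ht
  have hvol : (volume (ball x ((2:ℝ) ^ k * r))).toReal = ((2:ℝ) ^ k * r) ^ (N:ℝ) * V := by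
    rw [hVdef, Measure.addHaar_ball volume x ht.le, ENNReal.toReal_mul,
      ENNReal.toReal_ofReal (by positivity),
      show Module.finrank ℝ (EuclideanSpace ℝ (Fin N)) = N from finrank_euclideanSpace_fin,
      ← Real.rpow_natCast _ N]
  rw [hvol] at hlow
  have hupp := aux_upper hN hα hα0 x r hr
  rw [← hKdef, ← hVdef] at hupp
  have hA : (2:ℝ) ^ ((k:ℝ) * α) * (‖x‖ + r) ^ α ≤ (‖x‖ + 2 ^ k * r) ^ α := by
    have hle : ‖x‖ + 2 ^ k * r ≤ 2 ^ k * (‖x‖ + r) := by nlinarith [norm_nonneg x]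
    calc (2:ℝ) ^ ((k:ℝ) * α) * (‖x‖ + r) ^ α
        = ((2:ℝ) ^ (k:ℕ)) ^ α * (‖x‖ + r) ^ α := by
          rw [← Real.rpow_natCast 2 k, ← Real.rpow_mul (by norm_num)]
      _ = ((2:ℝ) ^ k * (‖x‖ + r)) ^ α := (Real.mul_rpow (by positivity) hxr.le).symm
      _ ≤ (‖x‖ + 2 ^ k * r) ^ α := Real.rpow_le_rpow_of_nonpos hxt hle hα0
  have hB : ((2:ℝ) ^ k * r) ^ ((N:ℝ)) = 2 ^ ((k:ℝ) * (N:ℝ)) * r ^ ((N:ℝ)) := by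
    rw [Real.mul_rpow (by positivity) hr.le, ← Real.rpow_natCast 2 k,
      ← Real.rpow_mul (by norm_num)]
  have hE : (2:ℝ) ^ ((k:ℝ) * ((N:ℝ) + α)) = 2 ^ ((k:ℝ) * (N:ℝ)) * 2 ^ ((k:ℝ) * α) := by
    rw [← Real.rpow_add two_pos]; ring_nf
  set M := (3:ℝ) ^ (N:ℝ) * K + 3 ^ (-α) * V with hMdef
  calc V / M * 2 ^ ((k:ℝ) * ((N:ℝ) + α)) * ∫ y in ball x r, ‖y‖ ^ α
      ≤ V / M * 2 ^ ((k:ℝ) * ((N:ℝ) + α)) * (M * r ^ (N:ℝ) * (‖x‖ + r) ^ α) := by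
        refine mul_le_mul_of_nonneg_left hupp ?_
        exact mul_nonneg (div_nonneg hV.le hM.le) (Real.rpow_nonneg (by norm_num) _)
    _ = (V * 2 ^ ((k:ℝ) * (N:ℝ)) * r ^ (N:ℝ)) * (2 ^ ((k:ℝ) * α) * (‖x‖ + r) ^ α) := by
        rw [hE]; field_simp
    _ ≤ (V * 2 ^ ((k:ℝ) * (N:ℝ)) * r ^ (N:ℝ)) * (‖x‖ + 2 ^ k * r) ^ α := by
        refine mul_le_mul_of_nonneg_left hA ?_
        have : (0:ℝ) ≤ 2 ^ ((k:ℝ) * (N:ℝ)) := Real.rpow_nonneg (by norm_num) _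
        have : (0:ℝ) ≤ r ^ (N:ℝ) := Real.rpow_nonneg hr.le _
        positivity
    _ = ((2:ℝ) ^ k * r) ^ (N:ℝ) * V * (‖x‖ + 2 ^ k * r) ^ α := by rw [hB]; ring
    _ ≤ ∫ y in ball x ((2:ℝ) ^ k * r), ‖y‖ ^ α := hlow

end aux

theorem stmt8 (N : ℕ) (hN : 3 ≤ N) (ν : ℝ)
    (hν0 : 0 ≤ ν) (hν1 : ν < ((N : ℝ) - 2) / 2) :
    ∃ C : ℝ, 0 < C ∧
      ∀ (x : EuclideanSpace ℝ (Fin N)) (r : ℝ), 0 < r → ∀ k : ℕ,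
        C * (2 : ℝ) ^ ((k : ℝ) * ((N : ℝ) - 2 * ν)) *
            (∫ y in Metric.ball x r, ‖y‖ ^ (-(2 * ν))) ≤
          ∫ y in Metric.ball x ((2 : ℝ) ^ k * r), ‖y‖ ^ (-(2 * ν)) := by
  have hN0 : 0 < N := by omega
  have hNR : (3:ℝ) ≤ (N:ℝ) := by exact_mod_cast hN
  have hα0 : -(2 * ν) ≤ 0 := by linarith
  have hαN : -(N:ℝ) < -(2 * ν) := by nlinarith
  obtain ⟨C, hC, h⟩ := aux_main hN0 hαN hα0
  refine ⟨C, hC, ?_⟩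
  intro x r hr k
  have := h x r hr k
  rw [show (N:ℝ) - 2 * ν = (N:ℝ) + -(2 * ν) from by ring]
  exact this
end

section
/- Let A > 0, q > 1. Suppose y : (T,∞) → ℝ is twice differentiable, bounded, positive, and satisfies t^2 y''(t) = A y(t)^q for all t > T. Then lim_{t→∞} y(t) = 0. -/
open Set Filter

theorem stmt11 (T A q : ℝ) (hT : 0 < T) (hA : 0 < A) (hq : 1 < q)
    (y : ℝ → ℝ) (hC2 : ContDiffOn ℝ 2 y (Set.Ioi T))
    (hbdd : ∃ M : ℝ, ∀ t : ℝ, T < t → |y t| ≤ M)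
    (hpos : ∀ t : ℝ, T < t → 0 < y t)
    (heq : ∀ t : ℝ, T < t → t ^ 2 * deriv (deriv y) t = A * y t ^ q) :
    Filter.Tendsto y Filter.atTop (nhds 0) := by
  obtain ⟨M, hM⟩ := hbdd
  have hq0 : (0:ℝ) ≤ q := by linarith
  have hSopen : IsOpen (Ioi T) := isOpen_Ioi
  have hy_diff : DifferentiableOn ℝ y (Ioi T) := hC2.differentiableOn (by norm_num)
  have hy'_cd : ContDiffOn ℝ 1 (deriv y) (Ioi T) :=
    hC2.deriv_of_isOpen hSopen (by norm_num)
  have hy'_diff : DifferentiableOn ℝ (deriv y) (Ioi T) := hy'_cd.differentiableOn (by norm_num)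
  have hy_cont : ContinuousOn y (Ioi T) := hy_diff.continuousOn
  have hy'_cont : ContinuousOn (deriv y) (Ioi T) := hy'_cd.continuousOn
  -- second derivative formula and positivity
  have h2 : ∀ t, T < t → deriv (deriv y) t = A * y t ^ q / t ^ 2 := by
    intro t ht
    have ht0 : (0:ℝ) < t := hT.trans ht
    have := heq t ht
    field_simp
    linarith [this]
  have hpos2 : ∀ t, T < t → 0 < deriv (deriv y) t := by
    intro t ht
    rw [h2 t ht]
    have ht0 : (0:ℝ) < t := hT.trans ht
    have := hpos t ht
    positivity
  -- deriv y is strictly monotone on Ioi T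
  have hmono' : StrictMonoOn (deriv y) (Ioi T) := by
    apply strictMonoOn_of_deriv_pos (convex_Ioi T) hy'_cont
    intro x hx
    rw [interior_Ioi] at hx
    exact hpos2 x hx
  -- deriv y ≤ 0 on Ioi T
  have hM0 : 0 ≤ M := (abs_nonneg _).trans (hM (T+1) (by linarith))
  have hnonpos : ∀ t, T < t → deriv y t ≤ 0 := by
    intro t₀ ht₀
    by_contra hc
    push_neg at hc
    set c := deriv y t₀ with hcdef
    have hIci : Ici t₀ ⊆ Ioi T := fun x hx => lt_of_lt_of_le ht₀ hx
    have hIoi : Ioi t₀ ⊆ Ioi T := fun x hx => ht₀.trans hx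
    have key := Convex.mul_sub_le_image_sub_of_le_deriv (convex_Ici t₀)
      (hy_cont.mono hIci)
      (by rw [interior_Ici]; exact hy_diff.mono hIoi)
      (C := c) (by
        intro x hx
        rw [interior_Ici] at hx
        exact (hmono' ht₀ (hIoi hx) hx).le)
    have hb : t₀ ≤ t₀ + (2*M + 1)/c := by
      have : 0 ≤ (2*M+1)/c := by positivity
      linarith
    have h1 := key t₀ (le_refl t₀) _ hb hb
    have hcb : c * (t₀ + (2*M + 1)/c - t₀) = 2*M + 1 := by
      field_simp
      ring
    rw [hcb] at h1
    have hyb := hM _ (hIci hb)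
    have hyt₀ := (hpos t₀ ht₀)
    have : y (t₀ + (2*M + 1)/c) ≤ M := (abs_le.mp hyb).2
    linarith
  -- y is antitone on Ioi T
  have hanti : AntitoneOn y (Ioi T) := by
    apply antitoneOn_of_deriv_nonpos (convex_Ioi T) hy_cont
      (by rw [interior_Ioi]; exact hy_diff)
    intro x hx
    rw [interior_Ioi] at hx
    exact hnonpos x hx
  -- auxiliary function and limit
  set g : ℝ → ℝ := fun t => y (max t (T+1)) with hgdef
  have hmem : ∀ t : ℝ, max t (T+1) ∈ Ioi T := by
    intro t
    have : T + 1 ≤ max t (T+1) := le_max_right _ _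
    simp only [mem_Ioi]; linarith
  have hg_anti : Antitone g := by
    intro a b hab
    exact hanti (hmem a) (hmem b) (max_le_max hab le_rfl)
  have hg_bdd : BddBelow (Set.range g) := by
    refine ⟨0, ?_⟩
    rintro _ ⟨t, rfl⟩
    exact (hpos _ (hmem t)).le
  set L := ⨅ t, g t with hLdef
  have hgL : Tendsto g atTop (nhds L) := tendsto_atTop_ciInf hg_anti hg_bdd
  have hyg : y =ᶠ[atTop] g := by
    filter_upwards [eventually_ge_atTop (T+1)] with t ht
    have hmax : max t (T+1) = t := max_eq_left ht
    simp only [hgdef, hmax]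
  have hyL : Tendsto y atTop (nhds L) := hgL.congr' hyg.symm
  have hL0 : 0 ≤ L := by
    refine ge_of_tendsto hgL ?_
    filter_upwards with t
    exact (hpos _ (hmem t)).le
  have hLy : ∀ t, T + 1 ≤ t → L ≤ y t := by
    intro t ht
    have h := ciInf_le hg_bdd t
    have hmax : max t (T+1) = t := max_eq_left ht
    simp only [hgdef, hmax] at h
    exact h
  -- it suffices to show L = 0
  suffices hL : L = 0 by rwa [hL] at hyL
  by_contra hLne
  have hL : 0 < L := lt_of_le_of_ne hL0 (Ne.symm hLne)
  set P := A * L ^ q with hPdef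
  have hP : 0 < P := by positivity
  -- Step A : deriv y s ≤ -P/(4 s) for s ≥ T+1
  have stepA : ∀ s, T + 1 ≤ s → deriv y s ≤ -(P / (4 * s)) := by
    intro s hs
    have hs0 : (0:ℝ) < s := by linarith
    have hsT : T < s := by linarith
    have hIcc : Icc s (2*s) ⊆ Ioi T := fun x hx => lt_of_lt_of_le hsT hx.1
    have hIoo : Ioo s (2*s) ⊆ Ioi T := fun x hx => hsT.trans hx.1
    have key := Convex.mul_sub_le_image_sub_of_le_deriv (convex_Icc s (2*s))
      (hy'_cont.mono hIcc)
      (by rw [interior_Icc]; exact hy'_diff.mono hIoo)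
      (C := P / (4 * s^2)) (by
        intro x hx
        rw [interior_Icc] at hx
        have hxT : T < x := hIoo hx
        have hx0 : (0:ℝ) < x := hT.trans hxT
        rw [h2 x hxT]
        have hLyx : L ≤ y x := hLy x (by linarith [hx.1])
        have hrw : L ^ q ≤ y x ^ q := Real.rpow_le_rpow hL.le hLyx hq0
        have hx2 : x^2 ≤ 4 * s^2 := by nlinarith [hx.2, hx.1]
        calc P / (4 * s^2) ≤ P / x^2 := by gcongr
          _ ≤ A * y x ^ q / x ^ 2 := by
              rw [hPdef]
              gcongr)
    have hss : s ≤ 2*s := by linarith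
    have h1 := key s (by constructor <;> linarith) (2*s) (by constructor <;> linarith) hss
    have h2s : deriv y (2*s) ≤ 0 := hnonpos (2*s) (by linarith)
    have hEq : P / (4 * s^2) * (2*s - s) = P / (4*s) := by
      field_simp
      ring
    rw [hEq] at h1
    linarith
  -- Step B : y(2t) ≤ y t - P/8 for t ≥ T+1
  have stepB : ∀ t, T + 1 ≤ t → y (2*t) ≤ y t - P / 8 := by
    intro t ht
    have ht0 : (0:ℝ) < t := by linarith
    have htT : T < t := by linarith
    have hIcc : Icc t (2*t) ⊆ Ioi T := fun x hx => lt_of_lt_of_le htT hx.1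
    have hIoo : Ioo t (2*t) ⊆ Ioi T := fun x hx => htT.trans hx.1
    have key := Convex.image_sub_le_mul_sub_of_deriv_le (convex_Icc t (2*t))
      (hy_cont.mono hIcc)
      (by rw [interior_Icc]; exact hy_diff.mono hIoo)
      (C := -(P / (8 * t))) (by
        intro x hx
        rw [interior_Icc] at hx
        have hx1 : T + 1 ≤ x := by linarith [hx.1]
        have hx0 : (0:ℝ) < x := by linarith
        have h1 := stepA x hx1
        have : P / (8*t) ≤ P / (4*x) := by
          rw [div_le_div_iff₀ (by positivity) (by positivity)]
          nlinarith [hx.2, hP.le]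
        linarith)
      t (by constructor <;> linarith) (2*t) (by constructor <;> linarith) (by linarith)
    have hEq : -(P / (8 * t)) * (2*t - t) = -(P/8) := by
      field_simp
      ring
    rw [hEq] at key
    linarith
  -- iterate doubling to get a contradiction with positivity
  have hiter : ∀ n : ℕ, y (2^n * (T+1)) ≤ y (T+1) - n * (P/8) := by
    intro n
    induction n with
    | zero => simp
    | succ n ih =>
      have h2n : (1:ℝ) ≤ 2^n := one_le_pow₀ (by norm_num)
      have hge : T + 1 ≤ 2^n * (T+1) := by nlinarith
      have := stepB _ hge
      have hEq : 2 * (2^n * (T+1)) = 2^(n+1) * (T+1) := by ring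
      rw [hEq] at this
      push_cast
      linarith
  obtain ⟨n, hn⟩ := exists_nat_gt (y (T+1) / (P/8))
  have hgt : y (T+1) < n * (P/8) := by
    rw [div_lt_iff₀ (by positivity)] at hn
    linarith
  have h2n : (1:ℝ) ≤ 2^n := one_le_pow₀ (by norm_num)
  have hge : T + 1 ≤ 2^n * (T+1) := by nlinarith
  have := hpos (2^n * (T+1)) (by linarith)
  have := hiter n
  linarith
end
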